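/- arXiv:1306.6140 — 5 statements merged into one kernel-verified Lean document; each statement's English description precedes it below -/
import Mathlib

section
/- Let d ≥ 2 and m ≥ 1 be integers with (d−1) dividing (m+1), and set a = (m+1)/(d−1). Let p be a prime dividing d and t = ν_p(d). Let n ≥ 1 be an integer with m ≤ d^{n+1} − 3. Then ν_p(B(d,m,n)) ≥ −(ν_p(a!) + t·a); that is, either B(d,m,n) = 0 or the p-adic valuation of the rational number B(d,m,n) is at least −(ν_p(a!) + t·a). -/
/-- Generalized binomial coefficient `C_j(x) = x(x-1)⋯(x-j+1)/j!`, with `C_0(x) = 1`. -/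
noncomputable def genBinom (x : ℚ) (j : ℕ) : ℚ :=
  (∏ i ∈ Finset.range j, (x - (i : ℚ))) / (Nat.factorial j : ℚ)

/-- The Ewing–Schober combinatorial formula `B(d,m,n)`: the sum is over all tuples
`(j_1,…,j_n)` of nonnegative integers (here `j : Fin n → ℕ`, 0-indexed, so `j k`
corresponds to `j_{k+1}`) satisfying `Σ_{k=1}^n (d^{n-k+1} - 1) j_k = m + 1`, of
`Π_{k=1}^n C_{j_k}(m/d^{n-k+1} - Σ_{l=1}^{k-1} d^{k-l} j_l)`, multiplied by `-(1/m)`. -/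
noncomputable def multibrotB (d m n : ℕ) : ℚ :=
  -(1 / (m : ℚ)) * ∑ᶠ j : Fin n → ℕ,
    if (∑ k : Fin n, (d ^ (n - k.val) - 1) * j k) = m + 1 then
      ∏ k : Fin n,
        genBinom ((m : ℚ) / (d : ℚ) ^ (n - k.val)
          - ∑ l ∈ Finset.univ.filter (fun l : Fin n => l < k),
              (d : ℚ) ^ (k.val - l.val) * ((j l : ℕ) : ℚ)) (j k)
    else 0

/-!
Clearing denominators: `d^{(n-k) j_k} j_k! C_{j_k}(X_k) = ∏_{i < j_k} (m - d^{n-k} (σ_k + i))`,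
where `X_k = m / d^{n-k} - σ_k` with `σ_k = Σ_{l<k} d^{k-l} j_l ∈ ℕ`. For the first `k` with
`j_k ≠ 0` we have `σ_k = 0`, so the factor `i = 0` is `m`, which cancels the prefactor `1/m`.
Bernoulli's inequality `(n-k)(d-1) ≤ d^{n-k} - 1` turns the constraint on `j` into
`Σ_k (n-k) j_k ≤ a`, hence `Σ_k j_k ≤ a`, and all the denominators divide `d^a a!`.
So `d^a a! B(d,m,n)` is an integer and `ν_p(B) ≥ -ν_p(d^a a!) = -(t a + ν_p(a!))`.
-/

open Finset
open scoped Nat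

lemma pow_mul_factorial_mul_genBinom (D x : ℚ) (j : ℕ) :
    D ^ j * j ! * genBinom x j = ∏ i ∈ range j, (D * x - D * i) := by
  simp only [genBinom, ← mul_sub, prod_mul_distrib, prod_const, card_range]
  field_simp

lemma mul_sub_one_le_pow_sub_one {d : ℕ} (hd : 1 ≤ d) (e : ℕ) :
    e * (d - 1) ≤ d ^ e - 1 := by
  have := one_add_le_pow_of_two_add_nonneg (Nat.zero_le (2 + (d - 1))) e
  rw [Nat.add_sub_cancel' hd, Nat.cast_id] at this
  omega

lemma exists_ne_zero_forall_lt_eq_zero {ι M : Type*} [Preorder ι] [WellFoundedLT ι] [Zero M]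
    {j : ι → M} (hj : j ≠ 0) : ∃ k, j k ≠ 0 ∧ ∀ l < k, j l = 0 := by
  obtain ⟨k, hk, hmin⟩ := wellFounded_lt.has_min {k | j k ≠ 0} (Function.ne_iff.1 hj)
  exact ⟨k, hk, fun l hl => by_contra fun h => hmin l h hl⟩

lemma neg_padicValNat_le_padicValRat {p : ℕ} [Fact p.Prime] {N : ℕ} (hN : N ≠ 0) {q : ℚ}
    (hq : q ≠ 0) (h : (N : ℚ) * q ∈ (Int.castRingHom ℚ).range) :
    -(padicValNat p N : ℤ) ≤ padicValRat p q := by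
  obtain ⟨z, hz⟩ := h
  have hmul := padicValRat.mul (p := p) (Nat.cast_ne_zero.2 hN) hq
  rw [← hz, eq_intCast, padicValRat.of_int, padicValRat.of_nat] at hmul
  omega

section Multibrot

def multibrotShift (d : ℕ) {n : ℕ} (j : Fin n → ℕ) (k : Fin n) : ℕ :=
  ∑ l ∈ univ.filter (· < k), d ^ (k.val - l.val) * j l

def multibrotArg (d m n : ℕ) (j : Fin n → ℕ) (k : Fin n) : ℚ :=
  (m : ℚ) / (d : ℚ) ^ (n - k.val)
    - ∑ l ∈ univ.filter (· < k), (d : ℚ) ^ (k.val - l.val) * ((j l : ℕ) : ℚ)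

def multibrotTermDenom (d : ℕ) {n : ℕ} (j : Fin n → ℕ) : ℕ :=
  ∏ k : Fin n, (d ^ (n - k.val)) ^ j k * (j k)!

def multibrotTermNumer (d m : ℕ) {n : ℕ} (j : Fin n → ℕ) : ℤ :=
  ∏ k : Fin n, ∏ i ∈ range (j k), ((m : ℤ) - d ^ (n - k.val) * (multibrotShift d j k + i))

variable {d m n : ℕ}

lemma multibrotB_eq : multibrotB d m n = -(1 / (m : ℚ)) * ∑ᶠ j : Fin n → ℕ,
    if (∑ k : Fin n, (d ^ (n - k.val) - 1) * j k) = m + 1 then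
      ∏ k : Fin n, genBinom (multibrotArg d m n j k) (j k)
    else 0 := rfl

lemma pow_mul_multibrotArg (hd : d ≠ 0) (j : Fin n → ℕ) (k : Fin n) :
    (d : ℚ) ^ (n - k.val) * multibrotArg d m n j k
      = (m : ℚ) - (d : ℚ) ^ (n - k.val) * multibrotShift d j k := by
  simp only [multibrotArg, multibrotShift]
  push_cast
  field_simp

lemma multibrotTermDenom_mul_prod_genBinom (hd : d ≠ 0) (j : Fin n → ℕ) :
    (multibrotTermDenom d j : ℚ) * ∏ k, genBinom (multibrotArg d m n j k) (j k)
      = multibrotTermNumer d m j := by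
  simp only [multibrotTermDenom, multibrotTermNumer, Nat.cast_prod, ← prod_mul_distrib,
    Int.cast_prod]
  refine prod_congr rfl fun k _ => ?_
  push_cast
  rw [pow_mul_factorial_mul_genBinom]
  refine prod_congr rfl fun i _ => ?_
  rw [pow_mul_multibrotArg hd]
  ring

lemma natCast_dvd_multibrotTermNumer {j : Fin n → ℕ} (hj : j ≠ 0) :
    (m : ℤ) ∣ multibrotTermNumer d m j := by
  obtain ⟨k₀, hk₀, hmin⟩ := exists_ne_zero_forall_lt_eq_zero hj
  have hshift : multibrotShift d j k₀ = 0 :=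
    sum_eq_zero fun l hl => by simp [hmin l (mem_filter.1 hl).2]
  set f : Fin n → ℕ → ℤ := fun k i => m - d ^ (n - k.val) * (multibrotShift d j k + i)
  have hfactor : f k₀ 0 = m := by simp [f, hshift]
  have hdvd := (dvd_prod_of_mem (f k₀) (mem_range.2 (Nat.pos_of_ne_zero hk₀))).trans
    (dvd_prod_of_mem (fun k => ∏ i ∈ range (j k), f k i) (mem_univ k₀))
  rwa [hfactor] at hdvd

lemma multibrotTermDenom_dvd (hd : 2 ≤ d) {a : ℕ} {j : Fin n → ℕ}
    (h : ∑ k : Fin n, (d ^ (n - k.val) - 1) * j k = a * (d - 1)) :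
    multibrotTermDenom d j ∣ d ^ a * a ! := by
  have hweight : ∑ k : Fin n, (n - k.val) * j k ≤ a := by
    refine Nat.le_of_mul_le_mul_right (h ▸ ?_) (by omega : 0 < d - 1)
    rw [sum_mul]
    refine sum_le_sum fun k _ => ?_
    rw [mul_right_comm]
    exact Nat.mul_le_mul_right _ (mul_sub_one_le_pow_sub_one (by omega) _)
  have hcount : ∑ k, j k ≤ ∑ k : Fin n, (n - k.val) * j k :=
    sum_le_sum fun k _ => Nat.le_mul_of_pos_left _ (by omega)
  rw [multibrotTermDenom, prod_mul_distrib]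
  refine mul_dvd_mul ?_ ?_
  · simp_rw [← pow_mul, prod_pow_eq_pow_sum]
    exact pow_dvd_pow _ hweight
  · exact (Nat.prod_factorial_dvd_factorial_sum _ _).trans
      (Nat.factorial_dvd_factorial (hcount.trans hweight))

lemma natCast_mul_multibrotB_mem_range (hd : 2 ≤ d) (hm : m ≠ 0) {a : ℕ}
    (ha : a * (d - 1) = m + 1) :
    ((d ^ a * a ! : ℕ) : ℚ) * multibrotB d m n ∈ (Int.castRingHom ℚ).range := by
  rw [multibrotB_eq, ← mul_assoc, mul_finsum]
  refine finsum_induction _ (zero_mem _) (fun _ _ => add_mem) fun j => ?_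
  split_ifs with hj
  · obtain ⟨q, hq⟩ := multibrotTermDenom_dvd hd (hj.trans ha.symm)
    obtain ⟨z, hz⟩ : (m : ℤ) ∣ multibrotTermNumer d m j :=
      natCast_dvd_multibrotTermNumer (by rintro rfl; simp at hj)
    refine ⟨-(q * z), ?_⟩
    calc ((-(q * z) : ℤ) : ℚ)
        = -(q / m) * (multibrotTermNumer d m j : ℚ) := by rw [hz]; push_cast; field_simp
      _ = ((d ^ a * a ! : ℕ) : ℚ) * -(1 / m)
            * ∏ k, genBinom (multibrotArg d m n j k) (j k) := by
        rw [hq, ← multibrotTermDenom_mul_prod_genBinom (by omega)]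
        push_cast
        ring
  · simp

end Multibrot

theorem multibrotB_padicValRat_ge_general (d m n : ℕ) (hd : 2 ≤ d) (hm : 1 ≤ m)
    (hdvd : (d - 1) ∣ (m + 1)) (a : ℕ) (ha : a = (m + 1) / (d - 1))
    (p : ℕ) (hp : p.Prime) (t : ℕ) (ht : t = padicValNat p d) :
    multibrotB d m n = 0 ∨
      -((padicValNat p (Nat.factorial a) : ℤ) + (t : ℤ) * (a : ℤ))
        ≤ padicValRat p (multibrotB d m n) := by
  have := Fact.mk hp
  refine or_iff_not_imp_left.2 fun hB => ?_
  have had : a * (d - 1) = m + 1 := ha ▸ Nat.div_mul_cancel hdvd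
  have hval := neg_padicValNat_le_padicValRat (p := p) (by positivity) hB
    (natCast_mul_multibrotB_mem_range (n := n) hd (by omega) had)
  rw [padicValNat.mul (by positivity) (by positivity), padicValNat.pow, ← ht, Nat.cast_add,
    Nat.cast_mul] at hval
  linarith

theorem multibrotB_padicValRat_ge (d m n : ℕ) (hd : 2 ≤ d) (hm : 1 ≤ m) (hn : 1 ≤ n)
    (hdvd : (d - 1) ∣ (m + 1)) (a : ℕ) (ha : a = (m + 1) / (d - 1))
    (p : ℕ) (hp : p.Prime) (hpd : p ∣ d) (t : ℕ) (ht : t = padicValNat p d)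
    (hmn : m ≤ d ^ (n + 1) - 3) :
    multibrotB d m n = 0 ∨
      -((padicValNat p (Nat.factorial a) : ℤ) + (t : ℤ) * (a : ℤ))
        ≤ padicValRat p (multibrotB d m n) :=
  multibrotB_padicValRat_ge_general d m n hd hm hdvd a ha p hp t ht
end

section
/- Let d ≥ 3 and m ≥ 1 be integers such that (d−1) does not divide (m+1), and let n ≥ 1 be an integer with m ≤ d^{n+1} − 3. Then B(d,m,n) = 0. -/
theorem multibrotB_eq_zero_of_not_dvd (d m n : ℕ) (hd : 3 ≤ d) (hm : 1 ≤ m) (hn : 1 ≤ n)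
    (hndvd : ¬ (d - 1) ∣ (m + 1)) (hmn : m ≤ d ^ (n + 1) - 3) :
    multibrotB d m n = 0 := by
  unfold multibrotB
  rw [finsum_eq_zero_of_forall_eq_zero, mul_zero]
  intro j
  rw [if_neg]
  intro hsum
  apply hndvd
  rw [← hsum]
  apply Finset.dvd_sum
  intro k _
  exact Dvd.dvd.mul_right (by simpa using Nat.sub_dvd_pow_sub_pow d 1 (n - k.val)) _
end

section
/- Let m ≥ 1 be an integer and let n ≥ 1 be an integer with m ≤ 2^{n+1} − 3. Then ν_2(B(2,m,n)) ≥ −ν_2((2m+2)!), and equality ν_2(B(2,m,n)) = −ν_2((2m+2)!) holds (in particular B(2,m,n) ≠ 0) if and only if m is odd. -/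
/-!
Work with the `2`-adic absolute value `|·|`, and put `v = ν₂(m)`, `N = ν₂((2m+2)!)`.
The summands of `B(2,m,n)` are products of factors `C_j(m/2^e - t)` with `t ∈ ℕ` and
`1 ≤ e ≤ n`. When `e > v` every `m/2^e - t - i` has absolute value `2^(e-v)`, so the factor has
absolute value exactly `2^((e-v) j + ν₂(j!))`; when `e ≤ v` the argument is an integer and the
factor is `2`-integral. Legendre's formula, through `ν₂(a!) + ν₂(b!) ≤ ν₂((a+b)!)` and
`ν₂((2a)!) = a + ν₂(a!)`, bounds the resulting exponent of every tuple with
`Σ (2^(e_k) - 1) j_k = m + 1` by `N - v - 1` when `m` is even, and by `N - 1` when `m` is odd,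
except for the tuple supported on the last coordinate (`e = 1`, `j = m + 1`), whose summand
`C_{m+1}(m/2)` has absolute value exactly `2^N`. As `|1/m| = 2^v`, this gives `|B| < 2^N` for
even `m` and, by the ultrametric inequality, `|B| = 2^N` for odd `m`.
-/

open Finset Nat

theorem padicNorm_natCast_eq {p n : ℕ} (hn : n ≠ 0) :
    padicNorm p n = ((p : ℚ) ^ padicValNat p n)⁻¹ := by
  rw [padicNorm.eq_zpow_of_nonzero (by exact_mod_cast hn), padicValRat.of_nat, zpow_neg,
    zpow_natCast]

section PadicNorm

variable {p : ℕ} [Fact p.Prime]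

theorem padicNorm_eq_pow_iff {q : ℚ} {c : ℕ} :
    padicNorm p q = (p : ℚ) ^ c ↔ q ≠ 0 ∧ padicValRat p q = -c := by
  have hp : (1 : ℚ) < p := by exact_mod_cast (Fact.out : p.Prime).one_lt
  constructor
  · intro h
    have hq : q ≠ 0 := by
      rintro rfl
      exact (pow_pos (zero_lt_one.trans hp) c).ne (padicNorm.zero ▸ h)
    refine ⟨hq, ?_⟩
    rw [padicNorm.eq_zpow_of_nonzero hq, ← zpow_natCast] at h
    have := zpow_right_injective₀ (by positivity) hp.ne' h
    omega
  · rintro ⟨hq, hv⟩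
    rw [padicNorm.eq_zpow_of_nonzero hq, hv, neg_neg, zpow_natCast]

theorem eq_zero_or_neg_le_padicValRat_of_padicNorm_le {q : ℚ} {c : ℕ}
    (h : padicNorm p q ≤ (p : ℚ) ^ c) : q = 0 ∨ -(c : ℤ) ≤ padicValRat p q := by
  have hp : (1 : ℚ) < p := by exact_mod_cast (Fact.out : p.Prime).one_lt
  refine or_iff_not_imp_left.2 fun hq => ?_
  rw [padicNorm.eq_zpow_of_nonzero hq, ← zpow_natCast, zpow_le_zpow_iff_right₀ hp] at h
  omega

theorem padicNorm_sum_eq_of_lt {α : Type*} {s : Finset α} {F : α → ℚ} {a : α} (ha : a ∈ s)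
    (h : ∀ b ∈ s, b ≠ a → padicNorm p (F b) < padicNorm p (F a)) :
    padicNorm p (∑ b ∈ s, F b) = padicNorm p (F a) := by
  classical
  rw [← add_sum_erase s F ha]
  rcases (s.erase a).eq_empty_or_nonempty with hs | hs
  · simp [hs]
  have hrest : padicNorm p (∑ b ∈ s.erase a, F b) < padicNorm p (F a) :=
    padicNorm.sum_lt hs fun b hb => h b (mem_of_mem_erase hb) (ne_of_mem_erase hb)
  rw [padicNorm.add_eq_max_of_ne hrest.ne', max_eq_left hrest.le]

theorem padicNorm_prod {α : Type*} (s : Finset α) (f : α → ℚ) :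
    padicNorm p (∏ i ∈ s, f i) = ∏ i ∈ s, padicNorm p (f i) :=
  map_prod (IsAbsoluteValue.toAbsoluteValue (padicNorm p)) f s

theorem padicNorm_sub_natCast_of_one_lt {x : ℚ} (hx : 1 < padicNorm p x) (i : ℕ) :
    padicNorm p (x - i) = padicNorm p x := by
  have hi : padicNorm p (-(i : ℚ)) < padicNorm p x := by
    rw [padicNorm.neg]; exact (padicNorm.of_nat i).trans_lt hx
  rw [sub_eq_add_neg, padicNorm.add_eq_max_of_ne hi.ne', max_eq_left hi.le]

theorem padicNorm_neg_one_div_natCast {m : ℕ} (hm : m ≠ 0) :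
    padicNorm p (-(1 / (m : ℚ))) = (p : ℚ) ^ padicValNat p m := by
  rw [padicNorm.neg, padicNorm.div, padicNorm.one, padicNorm_natCast_eq hm, one_div, inv_inv]

theorem padicNorm_genBinom_of_one_lt {x : ℚ} (hx : 1 < padicNorm p x) (j : ℕ) :
    padicNorm p (genBinom x j) = padicNorm p x ^ j * (p : ℚ) ^ padicValNat p j ! := by
  rw [genBinom, padicNorm.div, padicNorm_natCast_eq (factorial_ne_zero j), div_inv_eq_mul,
    padicNorm_prod]
  simp only [padicNorm_sub_natCast_of_one_lt hx, prod_const, card_range]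

theorem genBinom_eq_choose (x : ℚ) (j : ℕ) : genBinom x j = Ring.choose x j := by
  rw [Ring.choose_eq_smul, ← Polynomial.aeval_eq_smeval, Polynomial.aeval_def,
    Polynomial.eval₂_eq_eval_map, descPochhammer_map, descPochhammer_eval_eq_prod_range,
    smul_eq_mul, genBinom, div_eq_inv_mul]

theorem genBinom_intCast (z : ℤ) (j : ℕ) : genBinom z j = ((Ring.choose z j : ℤ) : ℚ) :=
  (genBinom_eq_choose z j).trans (Ring.map_choose (Int.castRingHom ℚ) z j).symm

theorem padicNorm_natCast_div_pow_sub_natCast {m e : ℕ} (hm : m ≠ 0)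
    (he : padicValNat p m < e) (t : ℕ) :
    padicNorm p ((m : ℚ) / (p : ℚ) ^ e - t) = (p : ℚ) ^ (e - padicValNat p m) := by
  have hp : (1 : ℚ) < p := by exact_mod_cast (Fact.out : p.Prime).one_lt
  have hdiv : padicNorm p ((m : ℚ) / (p : ℚ) ^ e) = (p : ℚ) ^ (e - padicValNat p m) := by
    rw [padicNorm.div, IsAbsoluteValue.abv_pow (padicNorm p), padicNorm.padicNorm_p_of_prime,
      padicNorm_natCast_eq hm, inv_pow, inv_div_inv, pow_sub₀ _ (by positivity) he.le,
      div_eq_mul_inv]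
  rw [padicNorm_sub_natCast_of_one_lt (hdiv ▸ one_lt_pow₀ hp (by omega)), hdiv]

theorem padicNorm_genBinom_natCast_div_pow_sub_natCast {m e : ℕ} (hm : m ≠ 0)
    (he : padicValNat p m < e) (t j : ℕ) :
    padicNorm p (genBinom ((m : ℚ) / (p : ℚ) ^ e - t) j) =
      (p : ℚ) ^ ((e - padicValNat p m) * j + padicValNat p j !) := by
  have hp : (1 : ℚ) < p := by exact_mod_cast (Fact.out : p.Prime).one_lt
  have hx := padicNorm_natCast_div_pow_sub_natCast hm he t
  rw [padicNorm_genBinom_of_one_lt (hx ▸ one_lt_pow₀ hp (by omega)), hx, ← pow_mul, pow_add]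

theorem padicNorm_genBinom_natCast_div_pow_sub_natCast_le {m : ℕ} (hm : m ≠ 0)
    (e t j : ℕ) :
    padicNorm p (genBinom ((m : ℚ) / (p : ℚ) ^ e - t) j) ≤
      (p : ℚ) ^ ((e - padicValNat p m) * j + padicValNat p j !) := by
  rcases lt_or_ge (padicValNat p m) e with he | he
  · exact (padicNorm_genBinom_natCast_div_pow_sub_natCast hm he t j).le
  have hdvd : p ^ e ∣ m := (pow_dvd_pow p he).trans pow_padicValNat_dvd
  have hint : (m : ℚ) / (p : ℚ) ^ e - t = (((m / p ^ e : ℕ) : ℤ) - t : ℤ) := by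
    have hpe : ((p ^ e : ℕ) : ℚ) ≠ 0 := by
      exact_mod_cast (pow_pos (Fact.out : p.Prime).pos e).ne'
    rw [Int.cast_sub, Int.cast_natCast, Int.cast_natCast, Nat.cast_div hdvd hpe, Nat.cast_pow]
  rw [hint, genBinom_intCast]
  exact (padicNorm.of_int _).trans
    (one_le_pow₀ (by exact_mod_cast (Fact.out : p.Prime).one_lt.le))

end PadicNorm

section Legendre

variable {p : ℕ} [Fact p.Prime]

theorem padicValNat_factorial_add_le (a b : ℕ) :
    padicValNat p a ! + padicValNat p b ! ≤ padicValNat p (a + b)! := by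
  rw [← padicValNat.mul (factorial_ne_zero a) (factorial_ne_zero b)]
  exact (padicValNat_dvd_iff_le (factorial_ne_zero _)).1
    (pow_padicValNat_dvd.trans (factorial_mul_factorial_dvd_factorial_add a b))

theorem sum_padicValNat_factorial_le {ι : Type*} (s : Finset ι) (a : ι → ℕ) :
    ∑ i ∈ s, padicValNat p (a i)! ≤ padicValNat p (∑ i ∈ s, a i)! := by
  induction s using Finset.cons_induction with
  | empty => simp
  | cons i s hi ih =>
    rw [sum_cons, sum_cons]
    exact (Nat.add_le_add_left ih _).trans (padicValNat_factorial_add_le _ _)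

end Legendre

theorem two_mul_le_two_pow {e : ℕ} (he : 1 ≤ e) : 2 * e ≤ 2 ^ e := by
  induction e, he using Nat.le_induction with
  | base => norm_num
  | succ e he ih => rw [pow_succ]; omega

theorem padicValNat_two_factorial_two_pow_mul_add (e j : ℕ) :
    padicValNat 2 (2 ^ e * j)! + j = padicValNat 2 j ! + 2 ^ e * j := by
  induction e with
  | zero => simp
  | succ e ih =>
    rw [pow_succ, mul_comm _ 2, mul_assoc, padicValNat_factorial_mul]
    omega

/-- Equivalently, the binary digit sum of `(2^e - 1) j` is at most `e` times that of `j`. -/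
theorem le_padicValNat_two_factorial_mersenne_mul_add (e j : ℕ) :
    (2 ^ e - 1) * j + e * padicValNat 2 j ! ≤ padicValNat 2 ((2 ^ e - 1) * j)! + e * j := by
  induction e with
  | zero => simp
  | succ e ih =>
    have hsplit : (2 ^ (e + 1) - 1) * j = 2 ^ e * j + (2 ^ e - 1) * j := by
      have := Nat.one_le_two_pow (n := e)
      rw [pow_succ, ← add_mul]; congr 1; omega
    have hsuper := padicValNat_factorial_add_le (p := 2) (2 ^ e * j) ((2 ^ e - 1) * j)
    have hpow := padicValNat_two_factorial_two_pow_mul_add e j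
    rw [hsplit, add_mul, add_mul, one_mul, one_mul]
    omega

section Budget

variable {ι : Type*} [Fintype ι] (e j : ι → ℕ)

theorem sum_padicValNat_two_factorial_le (he : ∀ k, 1 ≤ e k) :
    ∑ k, (padicValNat 2 (j k)! + 2 * ((2 ^ e k - 1) * j k)) ≤
      padicValNat 2 (2 * ∑ k, (2 ^ e k - 1) * j k)! + ∑ k, e k * j k := by
  have hterm (k : ι) : padicValNat 2 (j k)! + 2 * ((2 ^ e k - 1) * j k) ≤
      padicValNat 2 ((2 ^ e k - 1) * j k)! + (2 ^ e k - 1) * j k + e k * j k := by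
    have := le_padicValNat_two_factorial_mersenne_mul_add (e k) (j k)
    have : padicValNat 2 (j k)! ≤ e k * padicValNat 2 (j k)! := Nat.le_mul_of_pos_left _ (he k)
    omega
  calc _ ≤ ∑ k, (padicValNat 2 ((2 ^ e k - 1) * j k)! + (2 ^ e k - 1) * j k + e k * j k) :=
        sum_le_sum fun k _ => hterm k
    _ ≤ _ := by
      rw [sum_add_distrib, sum_add_distrib, padicValNat_factorial_mul]
      have := sum_padicValNat_factorial_le (p := 2) univ fun k => (2 ^ e k - 1) * j k
      omega

theorem sum_padicValNat_two_factorial_add_le (he : ∀ k, 1 ≤ e k) {v : ℕ} (hv : 1 ≤ v)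
    (hvM : v + 1 ≤ ∑ k, (2 ^ e k - 1) * j k) :
    ∑ k, ((e k - v) * j k + padicValNat 2 (j k)!) + v + 1 ≤
      padicValNat 2 (2 * ∑ k, (2 ^ e k - 1) * j k)! := by
  have hterm (k : ι) : (e k - v) * j k + e k * j k ≤ (2 ^ e k - 1) * j k := by
    rw [← add_mul]
    have := two_mul_le_two_pow (he k)
    exact Nat.mul_le_mul_right _ (by omega)
  have hsum := sum_le_sum fun k (_ : k ∈ univ) => hterm k
  have hmain := sum_padicValNat_two_factorial_le e j he
  rw [sum_add_distrib] at hsum hmain ⊢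
  rw [← mul_sum] at hmain
  omega

theorem sum_padicValNat_two_factorial_lt (he : ∀ k, 1 ≤ e k) {k₀ : ι} (hk₀ : 2 ≤ e k₀)
    (hj : j k₀ ≠ 0) :
    ∑ k, (e k * j k + padicValNat 2 (j k)!) <
      padicValNat 2 (2 * ∑ k, (2 ^ e k - 1) * j k)! := by
  have hle (k : ι) : e k * j k + e k * j k ≤ 2 * ((2 ^ e k - 1) * j k) := by
    have := two_mul_le_two_pow (he k)
    rw [← two_mul, ← mul_assoc, ← mul_assoc]
    exact Nat.mul_le_mul_right _ (by omega)
  have hlt : e k₀ * j k₀ + e k₀ * j k₀ < 2 * ((2 ^ e k₀ - 1) * j k₀) := by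
    have := two_mul_le_two_pow (he k₀)
    rw [← two_mul, ← mul_assoc, ← mul_assoc]
    exact Nat.mul_lt_mul_of_pos_right (by omega) (Nat.pos_of_ne_zero hj)
  have hsum := sum_lt_sum (fun k (_ : k ∈ univ) => hle k) ⟨k₀, mem_univ _, hlt⟩
  have hmain := sum_padicValNat_two_factorial_le e j he
  rw [sum_add_distrib] at hsum hmain ⊢
  omega

end Budget

noncomputable def multibrotSummand (m : ℕ) {n : ℕ} (j : Fin n → ℕ) : ℚ :=
  ∏ k : Fin n, genBinom ((m : ℚ) / 2 ^ (n - k.val) -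
    ((∑ l ∈ univ.filter (· < k), 2 ^ (k.val - l.val) * j l : ℕ) : ℚ)) (j k)

def admissibleTuples (m n : ℕ) : Finset (Fin n → ℕ) :=
  (Fintype.piFinset fun _ => range (m + 2)).filter
    fun j => ∑ k : Fin n, (2 ^ (n - k.val) - 1) * j k = m + 1

theorem mem_admissibleTuples {m n : ℕ} {j : Fin n → ℕ} :
    j ∈ admissibleTuples m n ↔ ∑ k : Fin n, (2 ^ (n - k.val) - 1) * j k = m + 1 := by
  refine ⟨fun hj => (mem_filter.1 hj).2, fun hj => mem_filter.2 ⟨?_, hj⟩⟩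
  refine Fintype.mem_piFinset.2 fun k => mem_range.2 ?_
  have hk : j k ≤ (2 ^ (n - k.val) - 1) * j k :=
    Nat.le_mul_of_pos_left _ (Nat.sub_pos_of_lt (Nat.one_lt_two_pow (by omega)))
  have := hj ▸ single_le_sum (fun (i : Fin n) _ => Nat.zero_le ((2 ^ (n - i.val) - 1) * j i))
    (mem_univ k)
  omega

theorem multibrotB_two_eq_sum (m n : ℕ) :
    multibrotB 2 m n = -(1 / m) * ∑ j ∈ admissibleTuples m n, multibrotSummand m j := by
  rw [multibrotB, finsum_eq_sum_of_support_subset _ fun j hj => ?_]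
  · congr 1
    refine sum_congr rfl fun j hj => ?_
    rw [if_pos (mem_admissibleTuples.1 hj), multibrotSummand]
    push_cast
    rfl
  · by_contra hnot
    exact hj (if_neg fun h => hnot (mem_admissibleTuples.2 h))

theorem padicNorm_multibrotSummand_le {m : ℕ} (hm : m ≠ 0) {n : ℕ} (j : Fin n → ℕ) :
    padicNorm 2 (multibrotSummand m j) ≤
      2 ^ ∑ k : Fin n, ((n - k.val - padicValNat 2 m) * j k + padicValNat 2 (j k)!) := by
  rw [multibrotSummand, padicNorm_prod, ← prod_pow_eq_pow_sum]
  refine prod_le_prod (fun k _ => padicNorm.nonneg _) fun k _ => ?_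
  exact_mod_cast padicNorm_genBinom_natCast_div_pow_sub_natCast_le hm _ _ _

theorem single_last_mem_admissibleTuples (m n : ℕ) :
    Pi.single (Fin.last n) (m + 1) ∈ admissibleTuples m (n + 1) := by
  rw [mem_admissibleTuples, sum_eq_single (Fin.last n) (fun k _ hk => by simp [hk]) (by simp)]
  simp

theorem multibrotSummand_single_last (m n : ℕ) :
    multibrotSummand m (Pi.single (Fin.last n) (m + 1)) = genBinom ((m : ℚ) / 2) (m + 1) := by
  have hshift : ∑ l ∈ univ.filter (· < Fin.last n),
      2 ^ ((Fin.last n).val - l.val) * (Pi.single (Fin.last n) (m + 1) : Fin (n + 1) → ℕ) l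
        = 0 :=
    sum_eq_zero fun l hl => by simp [(mem_filter.1 hl).2.ne]
  rw [multibrotSummand, Fin.prod_univ_castSucc, hshift]
  simp [genBinom, Fin.castSucc_ne_last]

theorem eq_single_last_of_mem_admissibleTuples {m n : ℕ} {j : Fin (n + 1) → ℕ}
    (hj : j ∈ admissibleTuples m (n + 1)) (hzero : ∀ k, 2 ≤ n + 1 - k.val → j k = 0) :
    j = Pi.single (Fin.last n) (m + 1) := by
  have hinit (k : Fin n) : j k.castSucc = 0 := hzero _ (by simp; omega)
  rw [mem_admissibleTuples, Fin.sum_univ_castSucc] at hj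
  simp [hinit] at hj
  ext k
  induction k using Fin.lastCases <;> simp [hinit, hj, Fin.castSucc_ne_last]

theorem padicNorm_multibrotB_two_lt_of_even {m : ℕ} (hm : m ≠ 0) (heven : Even m) (n : ℕ) :
    padicNorm 2 (multibrotB 2 m n) < 2 ^ padicValNat 2 (2 * m + 2)! := by
  have hv : 1 ≤ padicValNat 2 m := one_le_padicValNat_of_dvd hm heven.two_dvd
  have hvm : padicValNat 2 m ≤ m :=
    (Nat.lt_two_pow_self).le.trans (Nat.le_of_dvd (Nat.pos_of_ne_zero hm) pow_padicValNat_dvd)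
  have hterm (j) (hj : j ∈ admissibleTuples m n) : padicNorm 2 (multibrotSummand m j) ≤
      2 ^ (padicValNat 2 (2 * m + 2)! - (padicValNat 2 m + 1)) := by
    have hbudget := sum_padicValNat_two_factorial_add_le (fun k : Fin n => n - k.val) j
      (fun k => by omega) hv (by rw [mem_admissibleTuples.1 hj]; omega)
    rw [mem_admissibleTuples.1 hj, mul_add, mul_one] at hbudget
    exact (padicNorm_multibrotSummand_le hm j).trans (pow_le_pow_right₀ one_le_two (by omega))
  rw [multibrotB_two_eq_sum, padicNorm.mul, padicNorm_neg_one_div_natCast hm, Nat.cast_ofNat]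
  calc (2 : ℚ) ^ padicValNat 2 m *
        padicNorm 2 (∑ j ∈ admissibleTuples m n, multibrotSummand m j)
      ≤ 2 ^ padicValNat 2 m * 2 ^ (padicValNat 2 (2 * m + 2)! - (padicValNat 2 m + 1)) :=
        mul_le_mul_of_nonneg_left (padicNorm.sum_le' hterm (by positivity)) (by positivity)
    _ < 2 ^ padicValNat 2 (2 * m + 2)! := by
      have hN := padicValNat_factorial_mul (p := 2) (m + 1)
      rw [mul_add, mul_one] at hN
      rw [← pow_add]
      exact pow_lt_pow_right₀ one_lt_two (by omega)

theorem padicNorm_multibrotB_two_of_odd {m : ℕ} (hodd : Odd m) (n : ℕ) :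
    padicNorm 2 (multibrotB 2 m (n + 1)) = 2 ^ padicValNat 2 (2 * m + 2)! := by
  have hm : m ≠ 0 := hodd.pos.ne'
  have hv : padicValNat 2 m = 0 := padicValNat.eq_zero_of_not_dvd hodd.not_two_dvd_nat
  have hN := padicValNat_factorial_mul (p := 2) (m + 1)
  rw [mul_add, mul_one] at hN
  have hlead : padicNorm 2 (multibrotSummand m (Pi.single (Fin.last n) (m + 1))) =
      2 ^ padicValNat 2 (2 * m + 2)! := by
    have := padicNorm_genBinom_natCast_div_pow_sub_natCast (p := 2) hm (e := 1) (by omega) 0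
      (m + 1)
    simp only [Nat.cast_ofNat, pow_one, Nat.cast_zero, sub_zero, hv] at this
    rw [multibrotSummand_single_last, this, hN]
    ring
  have hrest (j) (hj : j ∈ admissibleTuples m (n + 1))
      (hne : j ≠ Pi.single (Fin.last n) (m + 1)) :
      padicNorm 2 (multibrotSummand m j) < 2 ^ padicValNat 2 (2 * m + 2)! := by
    obtain ⟨k, hk, hjk⟩ : ∃ k : Fin (n + 1), 2 ≤ n + 1 - k.val ∧ j k ≠ 0 := by
      by_contra! h
      exact hne (eq_single_last_of_mem_admissibleTuples hj h)
    have hbudget := sum_padicValNat_two_factorial_lt (fun k : Fin (n + 1) => n + 1 - k.val) j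
      (fun k => by omega) hk hjk
    rw [mem_admissibleTuples.1 hj, mul_add, mul_one] at hbudget
    refine (padicNorm_multibrotSummand_le hm j).trans_lt (pow_lt_pow_right₀ one_lt_two ?_)
    simpa [hv] using hbudget
  rw [multibrotB_two_eq_sum, padicNorm.mul, padicNorm_neg_one_div_natCast hm, hv, pow_zero, one_mul,
    padicNorm_sum_eq_of_lt (single_last_mem_admissibleTuples m n) (hlead ▸ hrest), hlead]

theorem multibrotB_two_zagier_general (m n : ℕ) (hm : 1 ≤ m) (hn : 1 ≤ n) :
    (multibrotB 2 m n = 0 ∨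
      -(padicValNat 2 (Nat.factorial (2 * m + 2)) : ℤ)
        ≤ padicValRat 2 (multibrotB 2 m n)) ∧
    ((multibrotB 2 m n ≠ 0 ∧
      padicValRat 2 (multibrotB 2 m n)
        = -(padicValNat 2 (Nat.factorial (2 * m + 2)) : ℤ)) ↔ Odd m) := by
  obtain ⟨n, rfl⟩ : ∃ n', n = n' + 1 := ⟨n - 1, by omega⟩
  have hnorm : padicNorm 2 (multibrotB 2 m (n + 1)) ≤ 2 ^ padicValNat 2 (2 * m + 2)! ∧
      (padicNorm 2 (multibrotB 2 m (n + 1)) = 2 ^ padicValNat 2 (2 * m + 2)! ↔ Odd m) := by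
    rcases Nat.even_or_odd m with heven | hodd
    · have hlt := padicNorm_multibrotB_two_lt_of_even (by omega) heven (n + 1)
      exact ⟨hlt.le, iff_of_false hlt.ne (Nat.not_odd_iff_even.2 heven)⟩
    · have heq := padicNorm_multibrotB_two_of_odd hodd n
      exact ⟨heq.le, iff_of_true heq hodd⟩
  rw [← Nat.cast_ofNat (R := ℚ)] at hnorm
  exact ⟨eq_zero_or_neg_le_padicValRat_of_padicNorm_le hnorm.1,
    padicNorm_eq_pow_iff.symm.trans hnorm.2⟩

theorem multibrotB_two_zagier (m n : ℕ) (hm : 1 ≤ m) (hn : 1 ≤ n)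
    (hmn : m ≤ 2 ^ (n + 1) - 3) :
    (multibrotB 2 m n = 0 ∨
      -(padicValNat 2 (Nat.factorial (2 * m + 2)) : ℤ)
        ≤ padicValRat 2 (multibrotB 2 m n)) ∧
    ((multibrotB 2 m n ≠ 0 ∧
      padicValRat 2 (multibrotB 2 m n)
        = -(padicValNat 2 (Nat.factorial (2 * m + 2)) : ℤ)) ↔ Odd m) :=
  multibrotB_two_zagier_general m n hm hn
end

section
/- Let m ≥ 1 be an integer and let n ≥ 1 be an integer with m ≤ 2^{n+1} − 3. Then ν_2(B(2,m,n)) ≥ −(2m+1); equivalently, 2^{2m+1} · B(2,m,n) is an integer. -/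
open Finset

theorem succ_mul_genBinom_succ (x : ℚ) (j : ℕ) :
    (j + 1 : ℚ) * genBinom x (j + 1) = x * genBinom (x - 1) j := by
  simp only [genBinom, prod_range_succ', Nat.factorial_succ, Nat.cast_mul]
  field_simp
  push_cast
  ring_nf

theorem sub_mul_genBinom (x : ℚ) (j : ℕ) :
    (x - j) * genBinom x j = x * genBinom (x - 1) j := by
  simp only [genBinom]
  rw [← mul_div_assoc, ← mul_div_assoc, mul_comm, ← prod_range_succ, prod_range_succ']
  push_cast
  ring_nf

section Padic

variable {p : ℕ} [Fact p.Prime]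

theorem Padic.norm_natCast_le_one (N : ℕ) : ‖(N : ℚ_[p])‖ ≤ 1 := by
  simpa using Padic.norm_int_le_one (p := p) N

theorem Padic.norm_prod_range_sub_le_norm_factorial {y : ℚ_[p]} (hy : ‖y‖ ≤ 1) (j : ℕ) :
    ‖∏ i ∈ range j, (y - i)‖ ≤ ‖(j.factorial : ℚ_[p])‖ := by
  set z : ℤ_[p] := ⟨y, hy⟩
  have h := PadicInt.norm_ascPochhammer_le j (-z)
  rw [ascPochhammer_eval_neg_eq_descPochhammer, descPochhammer_eval_eq_prod_range,
    norm_mul, norm_pow, norm_neg, norm_one, one_pow, one_mul] at h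
  have hcoe : ((∏ i ∈ range j, (z - i) : ℤ_[p]) : ℚ_[p]) = ∏ i ∈ range j, (y - i) :=
    map_prod PadicInt.Coe.ringHom _ _
  rwa [PadicInt.norm_def, PadicInt.norm_def, hcoe] at h

theorem norm_genBinom (x : ℚ) (j : ℕ) :
    ‖(genBinom x j : ℚ_[p])‖ = ‖∏ i ∈ range j, ((x : ℚ_[p]) - i)‖ / ‖(j.factorial : ℚ_[p])‖ := by
  simp [genBinom]

theorem norm_genBinom_le_one {x : ℚ} (hx : ‖(x : ℚ_[p])‖ ≤ 1) (j : ℕ) :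
    ‖(genBinom x j : ℚ_[p])‖ ≤ 1 := by
  rw [norm_genBinom]
  exact div_le_one_of_le₀ (Padic.norm_prod_range_sub_le_norm_factorial hx j) (norm_nonneg _)

theorem norm_genBinom_mul_max_le {x : ℚ} (hx : ‖(x : ℚ_[p])‖ ≤ 1) (j : ℕ) :
    ‖(genBinom x j : ℚ_[p])‖ * max ‖(x : ℚ_[p]) - j‖ ‖(j : ℚ_[p])‖ ≤ ‖(x : ℚ_[p])‖ := by
  have hx' : ‖((x - 1 : ℚ) : ℚ_[p])‖ ≤ 1 := by
    rw [Rat.cast_sub, sub_eq_add_neg]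
    exact (IsUltrametricDist.norm_add_le_max _ _).trans (max_le hx (by simp))
  have hshift : ∀ i, ‖(x : ℚ_[p])‖ * ‖(genBinom (x - 1) i : ℚ_[p])‖ ≤ ‖(x : ℚ_[p])‖ :=
    fun i => mul_le_of_le_one_right (norm_nonneg _) (norm_genBinom_le_one hx' i)
  rw [mul_max_of_nonneg _ _ (norm_nonneg _)]
  refine max_le ?_ ?_
  · have h := congrArg (fun q : ℚ => ‖(q : ℚ_[p])‖) (sub_mul_genBinom x j)
    simp only [Rat.cast_mul, Rat.cast_sub, Rat.cast_natCast, norm_mul] at h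
    rw [mul_comm, h]
    exact hshift j
  · cases j with
    | zero => simp [padicNorm.nonneg]
    | succ i =>
      have h := congrArg (fun q : ℚ => ‖(q : ℚ_[p])‖) (succ_mul_genBinom_succ x i)
      simp only [Rat.cast_mul, Rat.cast_add, Rat.cast_natCast, Rat.cast_one, norm_mul] at h
      push_cast
      rw [mul_comm, h]
      exact hshift i

theorem norm_prod_genBinom_le_of_norm_succ_le {x : ℕ → ℚ} {j : ℕ → ℕ} {n : ℕ}
    (hx : ∀ k < n, ‖(x k : ℚ_[p])‖ ≤ 1)
    (hstep : ∀ k < n, ‖(x (k + 1) : ℚ_[p])‖ ≤ ‖(x k : ℚ_[p]) - j k‖)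
    (hend : 1 ≤ ‖(x n : ℚ_[p]) + ∑ k ∈ range n, (j k : ℚ_[p])‖) :
    ‖((∏ k ∈ range n, genBinom (x k) (j k) : ℚ) : ℚ_[p])‖ ≤ ‖(x 0 : ℚ_[p])‖ := by
  set Φ : ℕ → ℝ := fun k =>
    max ‖(x 0 : ℚ_[p])‖ (max ‖(x k : ℚ_[p])‖ ‖∑ l ∈ range k, (j l : ℚ_[p])‖)
  have hΦ : ∀ k ≤ n, ‖((∏ l ∈ range k, genBinom (x l) (j l) : ℚ) : ℚ_[p])‖ * Φ k
      ≤ ‖(x 0 : ℚ_[p])‖ := by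
    intro k
    induction k with
    | zero => simp [Φ, padicNorm.nonneg]
    | succ k ih =>
      intro hk
      have hk' : k < n := hk
      have hΦ_succ : Φ (k + 1) ≤ max (Φ k) (max ‖(x k : ℚ_[p]) - j k‖ ‖(j k : ℚ_[p])‖) := by
        have hsum := IsUltrametricDist.norm_add_le_max (∑ l ∈ range k, (j l : ℚ_[p])) (j k)
        simp only [Φ, sum_range_succ]
        refine max_le (by simp) (max_le ((hstep k hk').trans (by simp)) (hsum.trans ?_))
        exact max_le (by simp) (by simp)
      have hC : ‖(genBinom (x k) (j k) : ℚ_[p])‖ * Φ (k + 1) ≤ Φ k := by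
        refine (mul_le_mul_of_nonneg_left hΦ_succ (norm_nonneg _)).trans ?_
        rw [mul_max_of_nonneg _ _ (norm_nonneg _)]
        refine max_le (mul_le_of_le_one_left (by positivity) (norm_genBinom_le_one (hx k hk') _)) ?_
        exact (norm_genBinom_mul_max_le (hx k hk') _).trans (by simp [Φ])
      calc ‖((∏ l ∈ range (k + 1), genBinom (x l) (j l) : ℚ) : ℚ_[p])‖ * Φ (k + 1)
          = ‖((∏ l ∈ range k, genBinom (x l) (j l) : ℚ) : ℚ_[p])‖
              * (‖(genBinom (x k) (j k) : ℚ_[p])‖ * Φ (k + 1)) := by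
            rw [prod_range_succ, Rat.cast_mul, norm_mul, mul_assoc]
        _ ≤ ‖((∏ l ∈ range k, genBinom (x l) (j l) : ℚ) : ℚ_[p])‖ * Φ k := by gcongr
        _ ≤ ‖(x 0 : ℚ_[p])‖ := ih hk'.le
  have hΦn : 1 ≤ Φ n :=
    hend.trans ((IsUltrametricDist.norm_add_le_max _ _).trans (le_max_right _ _))
  exact (le_mul_of_one_le_right (norm_nonneg _) hΦn).trans (hΦ n le_rfl)

theorem Padic.one_le_pow_mul_norm_factorial (N : ℕ) :
    1 ≤ (p : ℝ) ^ (N - 1) * ‖(N.factorial : ℚ_[p])‖ := by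
  have hv : padicValNat p N.factorial ≤ N - 1 := by
    rcases eq_or_ne N 0 with rfl | hN
    · simp
    · have := padicValNat_factorial_lt_of_ne_zero p hN
      omega
  have hp : (1 : ℝ) < p := by exact_mod_cast (Fact.out : p.Prime).one_lt
  rw [Padic.norm_eq_zpow_neg_valuation (by exact_mod_cast N.factorial_ne_zero),
    Padic.valuation_natCast, ← zpow_natCast, ← zpow_add₀ (by positivity)]
  exact one_le_zpow₀ hp.le (by omega)

theorem Padic.one_le_natCast_mul_norm {m : ℕ} (hm : m ≠ 0) : 1 ≤ (m : ℝ) * ‖(m : ℚ_[p])‖ := by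
  have hle : (p : ℝ) ^ padicValNat p m ≤ m := by
    exact_mod_cast Nat.le_of_dvd (Nat.pos_of_ne_zero hm) pow_padicValNat_dvd
  have hpos : (0 : ℝ) < (p : ℝ) ^ padicValNat p m := by
    have := (Fact.out : p.Prime).pos
    positivity
  rw [Padic.norm_eq_zpow_neg_valuation (by exact_mod_cast hm), Padic.valuation_natCast, zpow_neg,
    zpow_natCast, ← div_eq_mul_inv, le_div_iff₀ hpos, one_mul]
  exact hle

theorem norm_genBinom_mul_norm_factorial_le {x : ℚ} {R : ℝ} (hR : 1 ≤ R)
    (hx : ‖(x : ℚ_[p])‖ ≤ R) (j : ℕ) :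
    ‖(genBinom x j : ℚ_[p])‖ * ‖(j.factorial : ℚ_[p])‖ ≤ R ^ j := by
  have hfac : ‖(j.factorial : ℚ_[p])‖ ≠ 0 := by simp [Nat.factorial_ne_zero]
  rw [norm_genBinom, div_mul_cancel₀ _ hfac, norm_prod]
  calc ∏ i ∈ range j, ‖(x : ℚ_[p]) - i‖ ≤ ∏ _i ∈ range j, R :=
        prod_le_prod (fun _ _ => norm_nonneg _) fun i _ => by
          rw [sub_eq_add_neg]
          exact (IsUltrametricDist.norm_add_le_max _ _).trans
            (max_le hx (by simpa using (Padic.norm_natCast_le_one i).trans hR))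
    _ = R ^ j := by rw [prod_const, card_range]

theorem norm_prod_genBinom_le_pow {x : ℕ → ℚ} {j r : ℕ → ℕ} {n : ℕ}
    (hx : ∀ k < n, ‖(x k : ℚ_[p])‖ ≤ (p : ℝ) ^ r k) :
    ‖((∏ k ∈ range n, genBinom (x k) (j k) : ℚ) : ℚ_[p])‖
      ≤ (p : ℝ) ^ (∑ k ∈ range n, r k * j k + (∑ k ∈ range n, j k - 1)) := by
  set s := ∑ k ∈ range n, j k
  set C : ℕ → ℝ := fun k => ‖(genBinom (x k) (j k) : ℚ_[p])‖
  have hp : (1 : ℝ) ≤ p := by exact_mod_cast (Fact.out : p.Prime).one_lt.le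
  have hfac : ‖(s.factorial : ℚ_[p])‖ ≤ ∏ k ∈ range n, ‖((j k).factorial : ℚ_[p])‖ := by
    obtain ⟨q, hq⟩ := Nat.prod_factorial_dvd_factorial_sum (range n) j
    rw [hq, Nat.cast_mul, norm_mul, ← norm_prod, ← Nat.cast_prod]
    exact mul_le_of_le_one_right (norm_nonneg _) (Padic.norm_natCast_le_one q)
  have hterms : ∏ k ∈ range n, (C k * ‖((j k).factorial : ℚ_[p])‖)
      ≤ (p : ℝ) ^ ∑ k ∈ range n, r k * j k := by
    rw [← prod_pow_eq_pow_sum]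
    refine prod_le_prod (fun _ _ => by positivity) fun k hk => ?_
    rw [pow_mul]
    exact norm_genBinom_mul_norm_factorial_le (one_le_pow₀ hp) (hx k (mem_range.mp hk)) _
  rw [Rat.cast_prod, norm_prod, pow_add]
  calc ∏ k ∈ range n, C k
      ≤ (∏ k ∈ range n, C k) * ((p : ℝ) ^ (s - 1) * ‖(s.factorial : ℚ_[p])‖) :=
        le_mul_of_one_le_right (by positivity) (Padic.one_le_pow_mul_norm_factorial s)
    _ ≤ (∏ k ∈ range n, C k) * ((p : ℝ) ^ (s - 1) * ∏ k ∈ range n, ‖((j k).factorial : ℚ_[p])‖) := by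
        gcongr
    _ = (∏ k ∈ range n, (C k * ‖((j k).factorial : ℚ_[p])‖)) * (p : ℝ) ^ (s - 1) := by
        rw [prod_mul_distrib]
        ring
    _ ≤ _ := by gcongr

/-- No finiteness of the support is needed: a `finsum` with infinite support is `0`. -/
theorem norm_mul_finsum_le_one {α : Type*} {c : ℚ} {f : α → ℚ}
    (h : ∀ i, ‖((c * f i : ℚ) : ℚ_[p])‖ ≤ 1) : ‖((c * ∑ᶠ i, f i : ℚ) : ℚ_[p])‖ ≤ 1 := by
  refine finsum_induction (fun q => ‖((c * q : ℚ) : ℚ_[p])‖ ≤ 1) (by simp) (fun q r hq hr => ?_) h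
  rw [mul_add, Rat.cast_add]
  exact (IsUltrametricDist.norm_add_le_max _ _).trans (max_le hq hr)

end Padic

theorem exists_int_eq_of_forall_padic_norm_le_one {q : ℚ}
    (h : ∀ (p : ℕ) [Fact p.Prime], ‖(q : ℚ_[p])‖ ≤ 1) : ∃ k : ℤ, q = k := by
  refine ⟨q.num, (Rat.coe_int_num_of_den_eq_one ?_).symm⟩
  by_contra hden
  have : Fact q.den.minFac.Prime := ⟨Nat.minFac_prime hden⟩
  have hunit := PadicInt.isUnit_den q (h q.den.minFac)
  rw [PadicInt.isUnit_iff, PadicInt.norm_natCast_eq_one_iff] at hunit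
  exact (Nat.Prime.coprime_iff_not_dvd Fact.out).mp hunit (Nat.minFac_dvd _)

section EwingSchober

def ewingSchoberArg (d m n : ℕ) (j : ℕ → ℕ) (k : ℕ) : ℚ :=
  m / (d : ℚ) ^ (n - k) - ∑ l ∈ range k, (d : ℚ) ^ (k - l) * j l

noncomputable def ewingSchoberTerm (d m n : ℕ) (j : ℕ → ℕ) : ℚ :=
  if ∑ k ∈ range n, (d ^ (n - k) - 1) * j k = m + 1 then
    ∏ k ∈ range n, genBinom (ewingSchoberArg d m n j k) (j k)
  else 0

theorem multibrotB_eq_finsum (d m n : ℕ) :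
    multibrotB d m n
      = -(1 / m) * ∑ᶠ j : Fin n → ℕ, ewingSchoberTerm d m n (Function.extend Fin.val j 0) := by
  refine congrArg _ (finsum_congr fun j => ?_)
  have hj : ∀ k : Fin n, Function.extend Fin.val j 0 k = j k :=
    Fin.val_injective.extend_apply j 0
  have hsum : ∀ k : Fin n,
      ∑ l ∈ univ.filter (fun l : Fin n => l < k), (d : ℚ) ^ (k.val - l.val) * j l
        = ∑ l ∈ range k, (d : ℚ) ^ (k.val - l) * Function.extend Fin.val j 0 l := by
    intro k
    rw [filter_gt_eq_Iio, ← Nat.Iio_eq_range, ← Fin.map_valEmbedding_Iio, sum_map]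
    simp [hj]
  simp only [ewingSchoberTerm, ewingSchoberArg, ← Fin.sum_univ_eq_sum_range,
    ← Fin.prod_univ_eq_prod_range, hj, hsum]

variable {d m n : ℕ} {j : ℕ → ℕ}

theorem ewingSchoberArg_zero : ewingSchoberArg d m n j 0 = m / (d : ℚ) ^ n := by
  simp [ewingSchoberArg]

theorem ewingSchoberArg_succ (hd : d ≠ 0) {k : ℕ} (hk : k < n) :
    ewingSchoberArg d m n j (k + 1) = d * (ewingSchoberArg d m n j k - j k) := by
  have hexp : n - k = n - (k + 1) + 1 := by omega
  have hsum : ∑ l ∈ range k, (d : ℚ) ^ (k + 1 - l) * j l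
      = d * ∑ l ∈ range k, (d : ℚ) ^ (k - l) * j l := by
    rw [mul_sum]
    refine sum_congr rfl fun l hl => ?_
    rw [show k + 1 - l = k - l + 1 by have := mem_range.mp hl; omega, pow_succ]
    ring
  simp only [ewingSchoberArg, sum_range_succ, hsum, hexp, Nat.add_sub_cancel_left, pow_succ]
  field_simp
  ring

theorem ewingSchoberArg_add_sum_eq_neg_one (hd : d ≠ 0)
    (hc : ∑ k ∈ range n, (d ^ (n - k) - 1) * j k = m + 1) :
    ewingSchoberArg d m n j n + ∑ k ∈ range n, (j k : ℚ) = -1 := by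
  have hcq : ∑ k ∈ range n, ((d : ℚ) ^ (n - k) - 1) * j k = m + 1 := by
    have := congrArg (Nat.cast : ℕ → ℚ) hc
    push_cast [Nat.one_le_pow _ _ (Nat.pos_of_ne_zero hd)] at this
    exact this
  simp only [sub_mul, one_mul, sum_sub_distrib] at hcq
  simp only [ewingSchoberArg, Nat.sub_self, pow_zero, div_one]
  linear_combination -hcq

theorem sum_pos_of_ewingSchober_constraint
    (hc : ∑ k ∈ range n, (d ^ (n - k) - 1) * j k = m + 1) : 0 < ∑ k ∈ range n, j k :=
  Nat.pos_of_ne_zero fun h0 => by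
    rw [sum_eq_zero_iff] at h0
    rw [sum_eq_zero fun k hk => by rw [h0 k hk, mul_zero]] at hc
    omega

theorem weighted_sum_le_of_ewingSchober_constraint
    (hc : ∑ k ∈ range n, (2 ^ (n - k) - 1) * j k = m + 1) :
    ∑ k ∈ range n, (n - k) * j k ≤ m + 1 :=
  hc ▸ sum_le_sum fun _ _ => Nat.mul_le_mul_right _ (Nat.le_sub_one_of_lt Nat.lt_two_pow_self)

section Norms

variable {p : ℕ} [Fact p.Prime]

theorem ewingSchoberArg_cast (k : ℕ) :
    (ewingSchoberArg d m n j k : ℚ_[p])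
      = (m : ℚ_[p]) / (d : ℚ_[p]) ^ (n - k) - ((∑ l ∈ range k, d ^ (k - l) * j l : ℕ) : ℚ_[p]) := by
  simp [ewingSchoberArg]

theorem norm_ewingSchoberArg_le_one (hpd : ¬p ∣ d) (k : ℕ) :
    ‖(ewingSchoberArg d m n j k : ℚ_[p])‖ ≤ 1 := by
  have hd : ‖(d : ℚ_[p])‖ = 1 :=
    Padic.norm_natCast_eq_one_iff.mpr ((Nat.Prime.coprime_iff_not_dvd Fact.out).mpr hpd)
  rw [ewingSchoberArg_cast, sub_eq_add_neg]
  refine (IsUltrametricDist.norm_add_le_max _ _).trans (max_le ?_ ?_)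
  · rw [norm_div, norm_pow, hd, one_pow, div_one]
    exact Padic.norm_natCast_le_one m
  · rw [norm_neg]
    exact Padic.norm_natCast_le_one _

theorem norm_ewingSchoberArg_prime_le {c : ℕ} (hm : p ^ c ∣ m) {k : ℕ} (hc : c ≤ n - k) :
    ‖(ewingSchoberArg p m n j k : ℚ_[p])‖ ≤ (p : ℝ) ^ (n - k - c) := by
  obtain ⟨m', rfl⟩ := hm
  have hp : (1 : ℝ) ≤ p := by exact_mod_cast (Fact.out : p.Prime).one_lt.le
  have hp0 : (p : ℚ_[p]) ≠ 0 := by exact_mod_cast (Fact.out : p.Prime).ne_zero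
  have hsplit : ((p ^ c * m' : ℕ) : ℚ_[p]) / (p : ℚ_[p]) ^ (n - k)
      = (m' : ℚ_[p]) / (p : ℚ_[p]) ^ (n - k - c) := by
    rw [← Nat.sub_add_cancel hc, pow_add, Nat.add_sub_cancel]
    push_cast
    field_simp
  rw [ewingSchoberArg_cast, hsplit, sub_eq_add_neg]
  refine (IsUltrametricDist.norm_add_le_max _ _).trans (max_le ?_ ?_)
  · rw [norm_div, norm_pow, Padic.norm_p, inv_pow, div_inv_eq_mul]
    exact mul_le_of_le_one_left (by positivity) (Padic.norm_natCast_le_one m')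
  · rw [norm_neg]
    exact (Padic.norm_natCast_le_one _).trans (one_le_pow₀ hp)

theorem norm_prod_genBinom_ewingSchoberArg_le (hpd : ¬p ∣ d)
    (hc : ∑ k ∈ range n, (d ^ (n - k) - 1) * j k = m + 1) :
    ‖((∏ k ∈ range n, genBinom (ewingSchoberArg d m n j k) (j k) : ℚ) : ℚ_[p])‖
      ≤ ‖(m : ℚ_[p])‖ := by
  have hd0 : d ≠ 0 := by rintro rfl; exact hpd (dvd_zero p)
  have hd : ‖(d : ℚ_[p])‖ = 1 :=
    Padic.norm_natCast_eq_one_iff.mpr ((Nat.Prime.coprime_iff_not_dvd Fact.out).mpr hpd)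
  have hend : (ewingSchoberArg d m n j n : ℚ_[p]) + ∑ k ∈ range n, (j k : ℚ_[p]) = -1 := by
    exact_mod_cast ewingSchoberArg_add_sum_eq_neg_one hd0 hc
  have h := norm_prod_genBinom_le_of_norm_succ_le (p := p) (x := ewingSchoberArg d m n j) (j := j)
    (fun k _ => norm_ewingSchoberArg_le_one hpd k)
    (fun k hk => by rw [ewingSchoberArg_succ hd0 hk]; push_cast; rw [norm_mul, hd, one_mul])
    (by rw [hend, norm_neg, norm_one])
  rwa [ewingSchoberArg_zero, Rat.cast_div, norm_div, Rat.cast_pow, Rat.cast_natCast,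
    Rat.cast_natCast, norm_pow, hd, one_pow, div_one] at h

end Norms

theorem norm_prod_genBinom_ewingSchoberArg_two_le (hm : m ≠ 0)
    (hc : ∑ k ∈ range n, (2 ^ (n - k) - 1) * j k = m + 1) :
    ‖((∏ k ∈ range n, genBinom (ewingSchoberArg 2 m n j k) (j k) : ℚ) : ℚ_[2])‖
      ≤ 2 ^ (2 * m + 1) * ‖(m : ℚ_[2])‖ := by
  have hpos := sum_pos_of_ewingSchober_constraint hc
  have hweighted := weighted_sum_le_of_ewingSchober_constraint hc
  have hsum : ∑ k ∈ range n, j k ≤ ∑ k ∈ range n, (n - k) * j k :=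
    sum_le_sum fun k hk => Nat.le_mul_of_pos_left _ (by have := mem_range.mp hk; omega)
  rcases Nat.even_or_odd m with heven | hodd
  · have hdvd : 2 ^ 1 ∣ m := by simpa using heven.two_dvd
    have h := norm_prod_genBinom_le_pow (x := ewingSchoberArg 2 m n j) (j := j) (n := n)
      (r := fun k => n - k - 1) fun k hk => norm_ewingSchoberArg_prime_le (k := k) hdvd (by omega)
    have hshift : ∑ k ∈ range n, (n - k - 1) * j k + ∑ k ∈ range n, j k
        = ∑ k ∈ range n, (n - k) * j k := by
      rw [← sum_add_distrib]
      refine sum_congr rfl fun k hk => ?_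
      have := mem_range.mp hk
      rw [← Nat.succ_mul, Nat.succ_eq_add_one, Nat.sub_add_cancel (by omega)]
    have hexp : ∑ k ∈ range n, (n - k - 1) * j k + (∑ k ∈ range n, j k - 1) ≤ m := by omega
    have hm2 : (m : ℝ) ≤ 2 ^ (m + 1) := by
      exact_mod_cast Nat.lt_two_pow_self.le.trans (Nat.pow_le_pow_right two_pos m.le_succ)
    calc _ ≤ ((2 : ℕ) : ℝ) ^ m := h.trans (pow_le_pow_right₀ (by norm_num) hexp)
      _ = 2 ^ m * 1 := by norm_num
      _ ≤ 2 ^ m * (2 ^ (m + 1) * ‖(m : ℚ_[2])‖) := by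
        gcongr
        exact (Padic.one_le_natCast_mul_norm hm).trans (by gcongr)
      _ = 2 ^ (2 * m + 1) * ‖(m : ℚ_[2])‖ := by ring
  · have hm1 : ‖(m : ℚ_[2])‖ = 1 :=
      Padic.norm_natCast_eq_one_iff.mpr (Nat.coprime_two_left.mpr hodd)
    have h := norm_prod_genBinom_le_pow (x := ewingSchoberArg 2 m n j) (j := j) (n := n)
      (r := fun k => n - k) fun _ _ => norm_ewingSchoberArg_prime_le (c := 0) (one_dvd m) (by omega)
    rw [hm1, mul_one]
    exact_mod_cast h.trans (pow_le_pow_right₀ (by norm_num) (by omega))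

theorem norm_two_pow_div_mul_prod_genBinom_le_one {p : ℕ} [Fact p.Prime] (hm : m ≠ 0)
    (hc : ∑ k ∈ range n, (2 ^ (n - k) - 1) * j k = m + 1) :
    ‖((2 ^ (2 * m + 1) / m * ∏ k ∈ range n, genBinom (ewingSchoberArg 2 m n j k) (j k) : ℚ)
      : ℚ_[p])‖ ≤ 1 := by
  have hm0 : 0 < ‖(m : ℚ_[p])‖ := norm_pos_iff.mpr (by exact_mod_cast hm)
  rw [Rat.cast_mul, norm_mul, Rat.cast_div, norm_div, Rat.cast_pow, norm_pow, Rat.cast_natCast,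
    div_mul_eq_mul_div, div_le_one hm0]
  rcases eq_or_ne p 2 with rfl | hp
  · have h2 : ‖((2 : ℚ) : ℚ_[2])‖ = 2⁻¹ := by exact_mod_cast Padic.norm_p (p := 2)
    rw [h2, inv_pow]
    calc _ ≤ (2 ^ (2 * m + 1))⁻¹ * (2 ^ (2 * m + 1) * ‖(m : ℚ_[2])‖) := by
          gcongr
          exact norm_prod_genBinom_ewingSchoberArg_two_le hm hc
      _ = _ := by field_simp
  · have h2 : ‖((2 : ℚ) : ℚ_[p])‖ = 1 := by
      have := Padic.norm_natCast_eq_one_iff (p := p) (n := 2)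
      push_cast at this
      exact this.mpr ((Nat.coprime_primes Fact.out Nat.prime_two).mpr hp)
    rw [h2, one_pow, one_mul]
    refine norm_prod_genBinom_ewingSchoberArg_le (fun h => hp ?_) hc
    exact (Nat.prime_dvd_prime_iff_eq Fact.out Nat.prime_two).mp h

end EwingSchober

theorem multibrotB_two_ewing_schober_general (m n : ℕ) (hm : 1 ≤ m) :
    ∃ k : ℤ, (2 : ℚ) ^ (2 * m + 1) * multibrotB 2 m n = (k : ℚ) := by
  refine exists_int_eq_of_forall_padic_norm_le_one fun p _ => ?_
  rw [multibrotB_eq_finsum, ← mul_assoc]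
  refine norm_mul_finsum_le_one fun j => ?_
  unfold ewingSchoberTerm
  split_ifs with hc
  · have h := norm_two_pow_div_mul_prod_genBinom_le_one (p := p) (by omega) hc
    rwa [show ∀ F : ℚ, (2 : ℚ) ^ (2 * m + 1) * -(1 / m) * F = -(2 ^ (2 * m + 1) / m * F) by
      intro F; ring, Rat.cast_neg, norm_neg]
  · simp

theorem multibrotB_two_ewing_schober (m n : ℕ) (hm : 1 ≤ m) (hn : 1 ≤ n)
    (hmn : m ≤ 2 ^ (n + 1) - 3) :
    ∃ k : ℤ, (2 : ℚ) ^ (2 * m + 1) * multibrotB 2 m n = (k : ℚ) :=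
  multibrotB_two_ewing_schober_general m n hm
end

section
/- Let d ≥ 2, m ≥ 1 and n ≥ 1 be integers with (d−1) dividing (m+1), and set a = (m+1)/(d−1). For every tuple (j_1,…,j_n) of nonnegative integers satisfying Σ_{k=1}^n (d^{n−k+1} − 1) j_k = m + 1, one has Σ_{k=1}^n j_k (n−k+1) ≤ a, with equality if and only if j_1 = j_2 = ⋯ = j_{n−1} = 0 and j_n = a. -/
lemma pow_lb (c e : ℕ) : c * e + 1 ≤ (c + 1) ^ e := by
  induction e with
  | zero => simp
  | succ e ih =>
    rw [pow_succ' (c+1) e]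
    calc c * (e + 1) + 1 ≤ (c+1) * (c*e + 1) := by ring_nf; nlinarith
      _ ≤ (c+1) * (c+1)^e := Nat.mul_le_mul_left _ ih

lemma pow_lb_strict (c e : ℕ) (hc : 1 ≤ c) (he : 2 ≤ e) : c * e + 2 ≤ (c + 1) ^ e := by
  induction e with
  | zero => omega
  | succ e ih =>
    rcases Nat.lt_or_ge e 2 with h | h
    · interval_cases e
      · omega
      · have h2 : (c+1)^(1+1) = c*c + 2*c + 1 := by ring
        nlinarith
    · have h1 := ih (by omega)
      rw [pow_succ' (c+1) e]
      calc c * (e + 1) + 2 ≤ (c+1) * (c*e + 2) := by nlinarith [mul_le_mul_left hc (c*e)]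
        _ ≤ (c+1) * (c+1)^e := Nat.mul_le_mul_left _ h1


theorem tuple_weighted_sum_le (d m n : ℕ) (hd : 2 ≤ d) (hm : 1 ≤ m) (hn : 1 ≤ n)
    (hdvd : (d - 1) ∣ (m + 1)) (a : ℕ) (ha : a = (m + 1) / (d - 1))
    (j : Fin n → ℕ)
    (hj : ∑ k : Fin n, (d ^ (n - k.val) - 1) * j k = m + 1) :
    (∑ k : Fin n, j k * (n - k.val)) ≤ a ∧
      ((∑ k : Fin n, j k * (n - k.val)) = a
        ↔ ∀ k : Fin n, j k = if k.val = n - 1 then a else 0) := by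
  have hd1 : 1 ≤ d - 1 := by omega
  have hdc : d - 1 + 1 = d := by omega
  have hma : m + 1 = (d - 1) * a := by rw [ha]; exact (Nat.mul_div_cancel' hdvd).symm
  -- termwise bound
  have hpow : ∀ e : ℕ, (d - 1) * e ≤ d ^ e - 1 := by
    intro e
    have := pow_lb (d - 1) e
    rw [hdc] at this
    omega
  have hpow' : ∀ e : ℕ, 2 ≤ e → (d - 1) * e < d ^ e - 1 := by
    intro e he
    have := pow_lb_strict (d - 1) e hd1 he
    rw [hdc] at this
    have h1 : 1 ≤ d ^ e := Nat.one_le_pow _ _ (by omega)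
    omega
  have hterm : ∀ k : Fin n, (d - 1) * (j k * (n - k.val)) ≤ (d ^ (n - k.val) - 1) * j k := by
    intro k
    have := hpow (n - k.val)
    calc (d - 1) * (j k * (n - k.val)) = ((d - 1) * (n - k.val)) * j k := by ring
      _ ≤ (d ^ (n - k.val) - 1) * j k := Nat.mul_le_mul_right _ this
  have hsum : (d - 1) * (∑ k : Fin n, j k * (n - k.val)) ≤ (d - 1) * a := by
    rw [Finset.mul_sum, ← hma, ← hj]
    exact Finset.sum_le_sum fun k _ => hterm k
  have hle : (∑ k : Fin n, j k * (n - k.val)) ≤ a :=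
    Nat.le_of_mul_le_mul_left hsum (by omega)
  have hlt : n - 1 < n := by omega
  set klast : Fin n := ⟨n - 1, hlt⟩ with hkdef
  have hkv : (klast : Fin n).val = n - 1 := rfl
  refine ⟨hle, ?_, ?_⟩
  · intro hEq
    have heq : ∑ k : Fin n, (d - 1) * (j k * (n - k.val))
        = ∑ k : Fin n, (d ^ (n - k.val) - 1) * j k := by
      rw [← Finset.mul_sum, hEq, hj, hma]
    have hall := (Finset.sum_eq_sum_iff_of_le (fun k _ => hterm k)).1 heq
    have hzero : ∀ k : Fin n, k.val ≠ n - 1 → j k = 0 := by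
      intro k hk
      by_contra hne
      have hjk : 1 ≤ j k := Nat.one_le_iff_ne_zero.2 hne
      have he2 : 2 ≤ n - k.val := by
        have := k.isLt
        omega
      have hstrict := hpow' (n - k.val) he2
      have h1 : ((d - 1) * (n - k.val)) * j k < (d ^ (n - k.val) - 1) * j k :=
        (Nat.mul_lt_mul_right hjk).2 hstrict
      have h2 := hall k (Finset.mem_univ k)
      have h3 : (d - 1) * (j k * (n - k.val)) = ((d - 1) * (n - k.val)) * j k := by ring
      omega
    have hsingle : ∑ k : Fin n, (d ^ (n - k.val) - 1) * j k
        = (d ^ (n - (klast : Fin n).val) - 1) * j klast := by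
      apply Fintype.sum_eq_single
      intro b hb
      have hbv : b.val ≠ n - 1 := fun h => hb (Fin.ext (h.trans hkv.symm))
      rw [hzero b hbv, mul_zero]
    have hex : n - (klast : Fin n).val = 1 := by
      rw [hkv]
      omega
    rw [hj, hex, pow_one] at hsingle
    have hja : j klast = a := by
      have : (d - 1) * j klast = (d - 1) * a := by omega
      exact Nat.eq_of_mul_eq_mul_left (by omega) this
    intro k
    by_cases hk : k.val = n - 1
    · have hkk : k = klast := Fin.ext (hk.trans hkv.symm)
      rw [if_pos hk, hkk, hja]
    · rw [if_neg hk, hzero k hk]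
  · intro hspec
    have hsingle : ∑ k : Fin n, j k * (n - k.val) = j klast * (n - (klast : Fin n).val) := by
      apply Fintype.sum_eq_single
      intro b hb
      have hbv : b.val ≠ n - 1 := fun h => hb (Fin.ext (h.trans hkv.symm))
      rw [hspec b, if_neg hbv, zero_mul]
    rw [hsingle, hspec klast, hkv, if_pos rfl]
    have h1 : n - (n - 1) = 1 := by omega
    rw [h1, mul_one]
end
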